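/- For each fixed a with |a| < 1, the octonionic Szegő kernel S(x,a) = (1 - x̄a)/|1 - x̄a|⁸ is left 𝕆-analytic in x on the closed unit ball of ℝ⁸ ≅ 𝕆 (indeed on the ball of radius 1/|a|), i.e., D_x S(x,a) = 0. -/

import Mathlib

noncomputable section
open MeasureTheory Metric
open scoped Quaternion

/-- The octonions, via the Cayley–Dickson construction on the quaternions,
carrying the Euclidean (`L²`) norm. -/
abbrev Octonion : Type := WithLp 2 (ℍ[ℝ] × ℍ[ℝ])

namespace Octonion

def mk (a b : ℍ[ℝ]) : Octonion := (WithLp.equiv 2 (ℍ[ℝ] × ℍ[ℝ])).symm (a, b)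
def p1 (x : Octonion) : ℍ[ℝ] := (WithLp.equiv 2 (ℍ[ℝ] × ℍ[ℝ]) x).1
def p2 (x : Octonion) : ℍ[ℝ] := (WithLp.equiv 2 (ℍ[ℝ] × ℍ[ℝ]) x).2

instance : One Octonion := ⟨mk 1 0⟩
/-- Cayley–Dickson multiplication: `(a,b)(c,d) = (ac - d̄b, da + bc̄)`. -/
instance : Mul Octonion :=
  ⟨fun x y => mk (p1 x * p1 y - star (p2 y) * p2 x) (p2 y * p1 x + p2 x * star (p1 y))⟩

/-- Octonionic conjugation. -/
def conj (x : Octonion) : Octonion := mk (star (p1 x)) (-(p2 x))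

/-- The standard basis `e₀ = 1, e₁, …, e₇` of the octonions. -/
def e : Fin 8 → Octonion
  | 0 => mk 1 0
  | 1 => mk ⟨0,1,0,0⟩ 0
  | 2 => mk ⟨0,0,1,0⟩ 0
  | 3 => mk ⟨0,0,0,1⟩ 0
  | 4 => mk 0 1
  | 5 => mk 0 ⟨0,1,0,0⟩
  | 6 => mk 0 ⟨0,0,1,0⟩
  | 7 => mk 0 ⟨0,0,0,1⟩

/-- The real coordinates of an octonion w.r.t. the basis `e`. -/
def coord (i : Fin 8) (x : Octonion) : ℝ :=
  match i with
  | 0 => (p1 x).re | 1 => (p1 x).imI | 2 => (p1 x).imJ | 3 => (p1 x).imK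
  | 4 => (p2 x).re | 5 => (p2 x).imI | 6 => (p2 x).imJ | 7 => (p2 x).imK

/-- Partial derivative in the direction `e i`. -/
def pd (i : Fin 8) (f : Octonion → Octonion) (x : Octonion) : Octonion :=
  fderiv ℝ f x (e i)

/-- The generalized Cauchy–Riemann operator `Df = ∑ eᵢ ∂f/∂xᵢ`. -/
def D (f : Octonion → Octonion) (x : Octonion) : Octonion := ∑ i, e i * pd i f x

/-- The right-acting Cauchy–Riemann operator `fD = ∑ (∂f/∂xᵢ) eᵢ`. -/
def Dright (f : Octonion → Octonion) (x : Octonion) : Octonion := ∑ i, pd i f x * e i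

/-- The conjugate Cauchy–Riemann operator `D̄f = ∑ ēᵢ ∂f/∂xᵢ`. -/
def Dbar (f : Octonion → Octonion) (x : Octonion) : Octonion := ∑ i, conj (e i) * pd i f x

/-- The Laplacian `Δf = ∑ ∂²f/∂xᵢ²`. -/
def lap (f : Octonion → Octonion) (x : Octonion) : Octonion :=
  ∑ i, fderiv ℝ (fun y => fderiv ℝ f y (e i)) x (e i)

instance : MeasurableSpace Octonion := borel _
instance : BorelSpace Octonion := ⟨rfl⟩
instance : MeasureSpace Octonion := ⟨Measure.addHaar⟩

/-- The surface measure on the unit sphere `S⁷`. -/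
def sphereMeasure : Measure (sphere (0 : Octonion) 1) := (volume : Measure Octonion).toSphere

/-- `ω₈`, the surface area of the unit sphere in `ℝ⁸`. -/
def ω : ℝ := (sphereMeasure Set.univ).toReal

end Octonion

/-!
Write `u = 1 - x̄a`, so that the kernel is `|u|⁻⁸ u` and `∂ᵢu = -ēᵢa`; hence
`∂ᵢS = 8|u|⁻¹⁰ ⟨u, ēᵢa⟩ u - |u|⁻⁸ ēᵢa`. Multiply by `eᵢ` on the left and sum. Alternativity gives
`eᵢ(ēᵢa) = a`, so the second term contributes `-8|u|⁻⁸ a`. For the first, `⟨u, ēᵢa⟩ = ⟨aū, eᵢ⟩`,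
so expanding `aū` in the orthonormal basis `eᵢ` yields `∑ ⟨u, ēᵢa⟩ eᵢu = (aū)u = |u|² a`, which
contributes `+8|u|⁻⁸ a`. On the ball `|x̄a| = |x||a| < 1`, so `u ≠ 0`.
-/

open scoped InnerProductSpace

theorem fderiv_inv_norm_pow_smul_apply {E F : Type*} [NormedAddCommGroup E] [NormedSpace ℝ E]
    [NormedAddCommGroup F] [InnerProductSpace ℝ F] {u : E → F} {u' : E →L[ℝ] F} {x : E}
    (hu : HasFDerivAt u u' x) (hu0 : u x ≠ 0) (m : ℕ) (v : E) :
    fderiv ℝ (fun y => (‖u y‖ ^ (2 * m))⁻¹ • u y) x v =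
      (‖u x‖ ^ (2 * m))⁻¹ • u' v - (2 * m * (‖u x‖ ^ (2 * m + 2))⁻¹ * ⟪u x, u' v⟫_ℝ) • u x := by
  have hc : ‖u x‖ ^ 2 ≠ 0 := by positivity
  have hinv : HasDerivAt (fun t : ℝ => (t ^ m)⁻¹)
      (-(m * (‖u x‖ ^ 2) ^ (m - 1)) / ((‖u x‖ ^ 2) ^ m) ^ 2) (‖u x‖ ^ 2) :=
    (hasDerivAt_pow m _).inv (pow_ne_zero _ hc)
  have hF := (hinv.comp_hasFDerivAt x hu.norm_sq).fun_smul hu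
  simp only [Function.comp_def] at hF
  simp only [pow_mul]
  rw [hF.fderiv]
  simp only [add_apply, smul_apply, ContinuousLinearMap.smulRight_apply,
    ContinuousLinearMap.comp_apply, innerSL_apply_apply, smul_eq_mul]
  rcases m with _ | m
  · simp
  · rw [sub_eq_add_neg, ← neg_smul, Nat.add_sub_cancel]
    congr 2
    field_simp
    ring

namespace Octonion

@[ext] lemma ext {x y : Octonion} (h1 : p1 x = p1 y) (h2 : p2 x = p2 y) : x = y :=
  (WithLp.equiv 2 (ℍ[ℝ] × ℍ[ℝ])).injective (Prod.ext h1 h2)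

@[simp] lemma p1_zero : p1 (0 : Octonion) = 0 := rfl
@[simp] lemma p2_zero : p2 (0 : Octonion) = 0 := rfl
@[simp] lemma p1_add (x y : Octonion) : p1 (x + y) = p1 x + p1 y := rfl
@[simp] lemma p2_add (x y : Octonion) : p2 (x + y) = p2 x + p2 y := rfl
@[simp] lemma p1_smul (r : ℝ) (x : Octonion) : p1 (r • x) = r • p1 x := rfl
@[simp] lemma p2_smul (r : ℝ) (x : Octonion) : p2 (r • x) = r • p2 x := rfl
@[simp] lemma p1_mul (x y : Octonion) : p1 (x * y) = p1 x * p1 y - star (p2 y) * p2 x := rfl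
@[simp] lemma p2_mul (x y : Octonion) : p2 (x * y) = p2 y * p1 x + p2 x * star (p1 y) := rfl
@[simp] lemma p1_conj (x : Octonion) : p1 (conj x) = star (p1 x) := rfl
@[simp] lemma p2_conj (x : Octonion) : p2 (conj x) = -p2 x := rfl

lemma inner_def (x y : Octonion) : ⟪x, y⟫_ℝ =
    (p1 x).re * (p1 y).re + (p1 x).imI * (p1 y).imI + (p1 x).imJ * (p1 y).imJ +
      (p1 x).imK * (p1 y).imK + (p2 x).re * (p2 y).re + (p2 x).imI * (p2 y).imI +
      (p2 x).imJ * (p2 y).imJ + (p2 x).imK * (p2 y).imK := by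
  change ⟪p1 x, p1 y⟫_ℝ + ⟪p2 x, p2 y⟫_ℝ = _
  rw [Quaternion.inner_def, Quaternion.inner_def]
  simp only [Quaternion.re_mul, Quaternion.re_star, Quaternion.imI_star, Quaternion.imJ_star,
    Quaternion.imK_star]
  ring

-- Scoped, so that outside this namespace `*` and `-` keep elaborating through the basic
-- instances of `Octonion` rather than through the ring structure.
scoped instance : NonUnitalNonAssocRing Octonion where
  __ := (inferInstance : AddCommGroup Octonion)
  left_distrib x y z := by
    ext <;> simp only [p1_mul, p2_mul, p1_add, p2_add, star_add] <;> noncomm_ring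
  right_distrib x y z := by
    ext <;> simp only [p1_mul, p2_mul, p1_add, p2_add] <;> noncomm_ring
  zero_mul x := by ext <;> simp
  mul_zero x := by ext <;> simp

scoped instance : IsScalarTower ℝ Octonion Octonion where
  smul_assoc r x y := by ext <;> simp [smul_sub, smul_add]

scoped instance : SMulCommClass ℝ Octonion Octonion where
  smul_comm r x y := by ext <;> simp [smul_sub, smul_add]

lemma conj_add (x y : Octonion) : conj (x + y) = conj x + conj y := by
  ext <;> simp [add_comm]

lemma conj_smul (r : ℝ) (x : Octonion) : conj (r • x) = r • conj x := by
  ext <;> simp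

protected lemma norm_mul (x y : Octonion) : ‖x * y‖ = ‖x‖ * ‖y‖ := by
  have h : ‖x * y‖ ^ 2 = (‖x‖ * ‖y‖) ^ 2 := by
    simp only [mul_pow, ← real_inner_self_eq_norm_sq, inner_def, p1_mul, p2_mul]
    simp [Quaternion.re_mul, Quaternion.imI_mul, Quaternion.imJ_mul, Quaternion.imK_mul]
    ring
  exact (pow_left_inj₀ (norm_nonneg _) (by positivity) two_ne_zero).1 h

lemma norm_conj (x : Octonion) : ‖conj x‖ = ‖x‖ := by
  have h : ‖conj x‖ ^ 2 = ‖x‖ ^ 2 := by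
    simp only [← real_inner_self_eq_norm_sq, inner_def, p1_conj, p2_conj]
    simp
  exact (pow_left_inj₀ (norm_nonneg _) (norm_nonneg _) two_ne_zero).1 h

/- The octonions are not associative, but they are alternative; the next two identities are
the only substitute for associativity the argument needs. -/

lemma mul_conj_mul_left (x a : Octonion) : x * (conj x * a) = ‖x‖ ^ 2 • a := by
  rw [← real_inner_self_eq_norm_sq, inner_def]
  ext : 1 <;> ext <;>
    simp [Quaternion.re_mul, Quaternion.imI_mul, Quaternion.imJ_mul, Quaternion.imK_mul] <;> ring

lemma mul_conj_mul_right (a u : Octonion) : a * conj u * u = ‖u‖ ^ 2 • a := by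
  rw [← real_inner_self_eq_norm_sq, inner_def]
  ext : 1 <;> ext <;>
    simp [Quaternion.re_mul, Quaternion.imI_mul, Quaternion.imJ_mul, Quaternion.imK_mul] <;> ring

lemma inner_conj_mul (u x a : Octonion) : ⟪u, conj x * a⟫_ℝ = ⟪a * conj u, x⟫_ℝ := by
  simp only [inner_def, p1_mul, p2_mul, p1_conj, p2_conj]
  simp [Quaternion.re_mul, Quaternion.imI_mul, Quaternion.imJ_mul, Quaternion.imK_mul]
  ring

lemma orthonormal_e : Orthonormal ℝ e := by
  rw [orthonormal_iff_ite]
  intro i j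
  rw [inner_def]
  fin_cases i <;> fin_cases j <;> simp [e, p1, p2, mk]

protected lemma norm_one : ‖(1 : Octonion)‖ = 1 :=
  orthonormal_e.1 0

lemma finrank_eq_eight : Module.finrank ℝ Octonion = 8 := by
  rw [(WithLp.linearEquiv 2 ℝ (ℍ[ℝ] × ℍ[ℝ])).finrank_eq, Module.finrank_prod,
    Quaternion.finrank_eq_four]

def stdBasis : OrthonormalBasis (Fin 8) ℝ Octonion :=
  OrthonormalBasis.mk orthonormal_e
    (orthonormal_e.linearIndependent.span_eq_top_of_card_eq_finrank
      (by rw [finrank_eq_eight, Fintype.card_fin])).ge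

lemma sum_inner_e_smul_e (v : Octonion) : ∑ i, ⟪e i, v⟫_ℝ • e i = v := by
  simpa [stdBasis] using stdBasis.sum_repr' v

lemma sum_e_mul_conj_e_mul (a : Octonion) : ∑ i, e i * (conj (e i) * a) = (8 : ℝ) • a := by
  simp [mul_conj_mul_left, orthonormal_e.1, ← Nat.cast_smul_eq_nsmul ℝ]

lemma sum_inner_conj_e_mul_smul_e_mul (u a : Octonion) :
    ∑ i, ⟪u, conj (e i) * a⟫_ℝ • (e i * u) = ‖u‖ ^ 2 • a :=
  calc ∑ i, ⟪u, conj (e i) * a⟫_ℝ • (e i * u)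
      = (∑ i, ⟪e i, a * conj u⟫_ℝ • e i) * u := by
        simp only [inner_conj_mul, real_inner_comm, Finset.sum_mul, smul_mul_assoc]
    _ = ‖u‖ ^ 2 • a := by rw [sum_inner_e_smul_e, mul_conj_mul_right]

def conjMulRight (a : Octonion) : Octonion →L[ℝ] Octonion :=
  LinearMap.toContinuousLinearMap
    { toFun y := conj y * a
      map_add' x y := by simp only [conj_add, add_mul]
      map_smul' r x := by simp only [conj_smul, smul_mul_assoc, RingHom.id_apply] }

@[simp] lemma conjMulRight_apply (a y : Octonion) : conjMulRight a y = conj y * a := rfl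

lemma sum_e_mul_szego_partial_eq_zero (u a : Octonion) (hu : u ≠ 0) :
    ∑ i, e i * (-(‖u‖ ^ 8)⁻¹ • (conj (e i) * a) +
      (8 * (‖u‖ ^ 10)⁻¹ * ⟪u, conj (e i) * a⟫_ℝ) • u) = 0 :=
  calc _ = ∑ i, (-(‖u‖ ^ 8)⁻¹ • (e i * (conj (e i) * a)) +
        (8 * (‖u‖ ^ 10)⁻¹) • (⟪u, conj (e i) * a⟫_ℝ • (e i * u))) := by
        simp only [mul_add, mul_smul_comm, smul_smul]
    _ = -(‖u‖ ^ 8)⁻¹ • (8 : ℝ) • a + (8 * (‖u‖ ^ 10)⁻¹) • ‖u‖ ^ 2 • a := by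
        rw [Finset.sum_add_distrib, ← Finset.smul_sum, ← Finset.smul_sum,
          sum_e_mul_conj_e_mul, sum_inner_conj_e_mul_smul_e_mul]
    _ = 0 := by
        have : ‖u‖ ≠ 0 := norm_ne_zero_iff.2 hu
        match_scalars
        field_simp
        ring

end Octonion

open Octonion (conj e pd D conjMulRight conjMulRight_apply norm_conj
  sum_e_mul_szego_partial_eq_zero)

theorem octonion_szego_kernel_analytic_general (a : Octonion)
    (x : Octonion) (hx : ‖x‖ * ‖a‖ < 1) :
    Octonion.D (fun y =>
      (‖(1 : Octonion) - Octonion.conj y * a‖ ^ 8)⁻¹ •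
        ((1 : Octonion) - Octonion.conj y * a)) x = 0 := by
  have hu : HasFDerivAt (fun y => 1 - conj y * a) (-conjMulRight a) x :=
    (conjMulRight a).hasFDerivAt.const_sub 1
  have hu0 : 1 - conj x * a ≠ 0 := by
    rw [sub_ne_zero]
    intro h
    have := congrArg norm h
    rw [Octonion.norm_one, Octonion.norm_mul, norm_conj] at this
    linarith
  set u := 1 - conj x * a with hu_def
  have hpd (i : Fin 8) : pd i (fun y => (‖1 - conj y * a‖ ^ 8)⁻¹ • (1 - conj y * a)) x =
      -(‖u‖ ^ 8)⁻¹ • (conj (e i) * a) + (8 * (‖u‖ ^ 10)⁻¹ * ⟪u, conj (e i) * a⟫_ℝ) • u := by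
    rw [pd, fderiv_inv_norm_pow_smul_apply hu hu0 4]
    simp only [neg_apply, conjMulRight_apply, inner_neg_right, ← hu_def]
    match_scalars <;> ring
  simp only [D, hpd]
  exact sum_e_mul_szego_partial_eq_zero u a hu0

/-- The octonionic Szegő kernel `S(x,a) = (1 - x̄a)/|1 - x̄a|⁸` is left octonionic
analytic in `x` on the ball of radius `1/|a|` (in particular on the closed unit ball). -/
theorem octonion_szego_kernel_analytic (a : Octonion) (ha : ‖a‖ < 1)
    (x : Octonion) (hx : ‖x‖ * ‖a‖ < 1) :
    Octonion.D (fun y =>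
      (‖(1 : Octonion) - Octonion.conj y * a‖ ^ 8)⁻¹ •
        ((1 : Octonion) - Octonion.conj y * a)) x = 0 :=
  octonion_szego_kernel_analytic_general a x hx
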